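/- arXiv:1403.1916 — 2 statements merged into one kernel-verified Lean document; each statement's English description precedes it below -/
import Mathlib

section
/- Let P(λ) = Σ_{i=0}^{n} (-1)^i a_i λ^{n-i} be a monic polynomial (a_0 = 1) of degree n all of whose roots are positive real numbers. Then for each i with 2 ≤ i ≤ n, we have 0 < a_i ≤ C(n,i)·(a_1/n)^i. -/
/-!
The roots `s` of `P` are positive and `a j = e_j(s)`, which gives positivity. For the upper
bound, differentiate `∏ (X - x)` over `s` exactly `n - i` times. By Rolle the result still splits
over `ℝ`; its roots `t` are nonnegative because the logarithmic derivative `∑ 1 / (x - z)` has no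
zero for `x < 0`; and comparing coefficients shows that the normalized elementary symmetric
functions `e_j / C(·, j)` of `t` and of `s` agree for `j ≤ i`. AM-GM on the `i` roots `t` then
gives Maclaurin's inequality `e_i(s) / C(n, i) ≤ (e_1(s) / n) ^ i`.
-/

open Polynomial

namespace Multiset

theorem esymm_zero {R : Type*} [CommSemiring R] (s : Multiset R) : s.esymm 0 = 1 := by
  simp [esymm]

theorem esymm_one_eq_sum {R : Type*} [CommSemiring R] (s : Multiset R) : s.esymm 1 = s.sum := by
  simp [esymm, powersetCard_one]

theorem esymm_card_eq_prod {R : Type*} [CommSemiring R] (s : Multiset R) :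
    s.esymm (card s) = s.prod := by
  simp [esymm, powersetCard_self]

theorem esymm_pos {s : Multiset ℝ} (hs : ∀ x ∈ s, 0 < x) {k : ℕ} (hk : k ≤ card s) :
    0 < s.esymm k := by
  have hne : s.powersetCard k ≠ 0 := by
    simpa [← card_pos, card_powersetCard] using Nat.choose_pos hk
  simpa [esymm] using sum_lt_sum_of_nonempty (f := fun _ => (0 : ℝ)) (g := Multiset.prod) hne
    fun t ht => prod_pos fun x hx => hs x (mem_of_le (mem_powersetCard.1 ht).1 hx)

theorem prod_le_sum_div_card_pow {s : Multiset ℝ} (hs : ∀ x ∈ s, 0 ≤ x) :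
    s.prod ≤ (s.sum / card s) ^ card s := by
  classical
  rcases eq_or_ne s 0 with rfl | hs0
  · simp
  have hcard : (0 : ℝ) < card s := by exact_mod_cast card_pos.2 hs0
  have amgm := Real.geom_mean_le_arith_mean s.toFinset (fun x => (s.count x : ℝ)) id
    (fun _ _ => Nat.cast_nonneg _)
    (by exact_mod_cast (toFinset_sum_count_eq s).symm ▸ card_pos.2 hs0)
    (fun x hx => hs x (mem_toFinset.1 hx))
  simp only [Real.rpow_natCast, id, ← nsmul_eq_mul] at amgm
  rw [← Finset.prod_multiset_count, ← Finset.sum_multiset_count, ← Nat.cast_sum,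
    toFinset_sum_count_eq] at amgm
  rwa [Real.rpow_inv_le_iff_of_pos (prod_nonneg hs) (div_nonneg (sum_nonneg hs) hcard.le) hcard,
    Real.rpow_natCast] at amgm

end Multiset

theorem Nat.descFactorial_sub_mul_choose {n i j : ℕ} (hji : j ≤ i) (hi : i ≤ n) :
    (n - j).descFactorial (n - i) * n.choose j = n.descFactorial (n - i) * i.choose j := by
  rw [descFactorial_eq_factorial_mul_choose, descFactorial_eq_factorial_mul_choose,
    choose_symm_of_eq_add (show n - j = (n - i) + (i - j) by omega), choose_symm hi,
    mul_assoc, mul_assoc, choose_mul hji, Nat.mul_comm (n.choose j)]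

namespace Polynomial

theorem Splits.derivative_of_real {p : ℝ[X]} (hp : p.Splits) : p.derivative.Splits := by
  rw [splits_iff_card_roots]
  have := p.card_roots_le_derivative
  have := p.derivative.card_roots'
  have := p.natDegree_derivative_le
  have := hp.natDegree_eq_card_roots
  omega

theorem Splits.iterate_derivative_of_real {p : ℝ[X]} (hp : p.Splits) (k : ℕ) :
    (derivative^[k] p).Splits := by
  induction k with
  | zero => exact hp
  | succ k ih => rw [Function.iterate_succ_apply']; exact ih.derivative_of_real

theorem Splits.roots_derivative_nonneg {p : ℝ[X]} (hp : p.Splits) (h : ∀ x ∈ p.roots, 0 ≤ x) :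
    ∀ x ∈ p.derivative.roots, 0 ≤ x := by
  intro x hx
  by_contra! hx0
  have hp' : p.derivative ≠ 0 := ne_zero_of_mem_roots hx
  have hp0 : p ≠ 0 := by rintro rfl; simp at hp'
  have hpx : p.eval x ≠ 0 := fun hpx => (h x ((mem_roots hp0).2 hpx)).not_gt hx0
  have hroots : p.roots ≠ 0 :=
    hp.roots_ne_zero fun hd => hp' (derivative_of_natDegree_zero hd)
  -- every term of the logarithmic derivative `p'/p = ∑ 1/(x - z)` is negative at `x < 0`
  have hsum : (p.roots.map fun z => 1 / (x - z)).sum < 0 := by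
    simpa using Multiset.sum_lt_sum_of_nonempty (g := fun _ => (0 : ℝ)) hroots
      fun z hz => one_div_neg.2 (by linarith [h z hz])
  have := hp.eval_derivative_eq_eval_mul_sum hpx
  rw [(isRoot_of_mem_roots hx).eq_zero] at this
  exact mul_ne_zero hpx hsum.ne this.symm

theorem Splits.roots_iterate_derivative_nonneg {p : ℝ[X]} (hp : p.Splits)
    (h : ∀ x ∈ p.roots, 0 ≤ x) (k : ℕ) : ∀ x ∈ (derivative^[k] p).roots, 0 ≤ x := by
  induction k with
  | zero => exact h
  | succ k ih =>
    rw [Function.iterate_succ_apply']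
    exact (hp.iterate_derivative_of_real k).roots_derivative_nonneg ih

theorem coeff_iterate_derivative_multiset_prod_X_sub_C {R : Type*} [CommRing R]
    (s : Multiset R) {i j : ℕ} (hji : j ≤ i) (hi : i ≤ Multiset.card s) :
    (derivative^[Multiset.card s - i] (s.map fun t => X - C t).prod).coeff (i - j) =
      (Multiset.card s - j).descFactorial (Multiset.card s - i) * ((-1) ^ j * s.esymm j) := by
  rw [coeff_iterate_derivative, nsmul_eq_mul, Multiset.prod_X_sub_C_coeff s (by omega),
    show i - j + (Multiset.card s - i) = Multiset.card s - j by omega,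
    show Multiset.card s - (Multiset.card s - j) = j by omega]

theorem coeff_sum_C_mul_X_pow_sub {R : Type*} [Semiring R] (c : ℕ → R) {n j : ℕ} (hj : j ≤ n) :
    (∑ i ∈ Finset.range (n + 1), C (c i) * X ^ (n - i)).coeff (n - j) = c j := by
  rw [finsetSum_coeff, Finset.sum_eq_single j]
  · simp
  · intro i hi hij
    rw [coeff_C_mul_X_pow, if_neg (by rw [Finset.mem_range] at hi; omega)]
  · intro h; exact absurd (Finset.mem_range.2 (by omega)) h

theorem natDegree_sum_C_mul_X_pow_sub_le {R : Type*} [Semiring R] (c : ℕ → R) (n : ℕ) :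
    (∑ i ∈ Finset.range (n + 1), C (c i) * X ^ (n - i)).natDegree ≤ n :=
  natDegree_sum_le_of_forall_le _ _ fun i _ => (natDegree_C_mul_X_pow_le _ _).trans (Nat.sub_le n i)

end Polynomial

namespace Multiset

theorem exists_card_eq_choose_mul_esymm_eq {s : Multiset ℝ} (hs : ∀ x ∈ s, 0 ≤ x) {i : ℕ}
    (hi : i ≤ card s) :
    ∃ t : Multiset ℝ, card t = i ∧ (∀ x ∈ t, 0 ≤ x) ∧
      ∀ j ≤ i, ((card s).choose j : ℝ) * t.esymm j = i.choose j * s.esymm j := by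
  -- `t` is the root multiset of the `(n - i)`-th derivative `q` of `p = ∏ (X - x)`
  have hcoeff {j : ℕ} (hj : j ≤ i) := coeff_iterate_derivative_multiset_prod_X_sub_C s hj hi
  set n := card s
  set p := (s.map fun t => X - C t).prod
  have hp : p.Splits := by
    rw [splits_iff_card_roots, roots_multiset_prod_X_sub_C, natDegree_multiset_prod_X_sub_C_eq_card]
  set q := derivative^[n - i] p
  have hq : q.Splits := hp.iterate_derivative_of_real (n - i)
  have hlead : q.coeff i = n.descFactorial (n - i) := by
    simpa [esymm_zero] using hcoeff (Nat.zero_le i)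
  have hD : (0 : ℝ) < n.descFactorial (n - i) := by
    exact_mod_cast Nat.descFactorial_pos.2 (by omega)
  have hdeg : q.natDegree = i := by
    refine natDegree_eq_of_le_of_coeff_ne_zero ?_ (hlead ▸ hD.ne')
    exact (natDegree_iterate_derivative p _).trans (by
      rw [natDegree_multiset_prod_X_sub_C_eq_card]; omega)
  refine ⟨q.roots, by rw [← hq.natDegree_eq_card_roots, hdeg], ?_, fun j hj => ?_⟩
  · exact hp.roots_iterate_derivative_nonneg (by simpa [p, roots_multiset_prod_X_sub_C] using hs) _
  · have hvieta := coeff_eq_esymm_roots_of_splits hq (k := i - j) (by omega)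
    rw [hcoeff hj, leadingCoeff, hdeg, hlead, show i - (i - j) = j by omega] at hvieta
    have hsign : ((-1 : ℝ) ^ j) ≠ 0 := pow_ne_zero j (neg_ne_zero.2 one_ne_zero)
    have hvieta' : ((n - j).descFactorial (n - i) : ℝ) * s.esymm j =
        n.descFactorial (n - i) * q.roots.esymm j :=
      mul_left_cancel₀ hsign (by linear_combination hvieta)
    have hcomb := congrArg (Nat.cast (R := ℝ)) (Nat.descFactorial_sub_mul_choose hj hi)
    push_cast at hcomb
    apply mul_left_cancel₀ hD.ne'
    linear_combination s.esymm j * hcomb - (n.choose j : ℝ) * hvieta'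

theorem esymm_le_choose_mul_sum_div_card_pow {s : Multiset ℝ} (hs : ∀ x ∈ s, 0 ≤ x)
    {i : ℕ} (hi : i ≤ card s) :
    s.esymm i ≤ (card s).choose i * (s.sum / card s) ^ i := by
  obtain ⟨t, rfl, ht, heq⟩ := exists_card_eq_choose_mul_esymm_eq hs hi
  rcases Nat.eq_zero_or_pos (card t) with h0 | hpos
  · simp [h0, esymm_zero]
  have hn : (0 : ℝ) < card s := by exact_mod_cast hpos.trans_le hi
  have hprod := heq (card t) le_rfl
  have hsum := heq 1 hpos
  rw [esymm_card_eq_prod, Nat.choose_self, Nat.cast_one, one_mul] at hprod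
  rw [esymm_one_eq_sum, esymm_one_eq_sum, Nat.choose_one_right, Nat.choose_one_right] at hsum
  have hmean : t.sum / card t = s.sum / card s := by
    rw [div_eq_div_iff (by positivity) hn.ne']
    linarith
  rw [← hprod, ← hmean]
  exact mul_le_mul_of_nonneg_left (prod_le_sum_div_card_pow ht) (Nat.cast_nonneg _)

end Multiset

open Polynomial Finset

theorem stmt_0_general (n : ℕ) (a : ℕ → ℝ) (ha0 : a 0 = 1)
    (P : Polynomial ℝ)
    (hP : P = ∑ i ∈ Finset.range (n + 1), Polynomial.C ((-1) ^ i * a i) * Polynomial.X ^ (n - i))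
    (hsplit : P.Splits)
    (hpos : ∀ x : ℝ, P.IsRoot x → 0 < x) :
    ∀ i : ℕ, 2 ≤ i → i ≤ n →
      0 < a i ∧ a i ≤ (n.choose i : ℝ) * (a 1 / n) ^ i := by
  intro i hi2 hin
  have hcoeff {j : ℕ} (hj : j ≤ n) : P.coeff (n - j) = (-1) ^ j * a j :=
    hP ▸ coeff_sum_C_mul_X_pow_sub _ hj
  have hlead : P.coeff n = 1 := by simpa [ha0] using hcoeff (Nat.zero_le n)
  have hdeg : P.natDegree = n := natDegree_eq_of_le_of_coeff_ne_zero
    (hP ▸ natDegree_sum_C_mul_X_pow_sub_le _ n) (hlead ▸ one_ne_zero)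
  have hcard : Multiset.card P.roots = n := by rw [← hsplit.natDegree_eq_card_roots, hdeg]
  have hvieta {j : ℕ} (hj : j ≤ n) : a j = P.roots.esymm j := by
    have := coeff_eq_esymm_roots_of_splits hsplit (k := n - j) (by omega)
    rw [hcoeff hj, leadingCoeff, hdeg, hlead, Nat.sub_sub_self hj, one_mul] at this
    exact mul_left_cancel₀ (pow_ne_zero j (neg_ne_zero.2 one_ne_zero)) this
  have hroots : ∀ x ∈ P.roots, 0 < x := fun x hx => hpos x (isRoot_of_mem_roots hx)
  refine ⟨hvieta hin ▸ Multiset.esymm_pos hroots (hcard ▸ hin), ?_⟩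
  rw [hvieta hin, hvieta (by omega), Multiset.esymm_one_eq_sum, ← hcard]
  exact Multiset.esymm_le_choose_mul_sum_div_card_pow (fun x hx => (hroots x hx).le) (hcard ▸ hin)

theorem stmt_0 (n : ℕ) (hn : 2 ≤ n) (a : ℕ → ℝ) (ha0 : a 0 = 1)
    (P : Polynomial ℝ)
    (hP : P = ∑ i ∈ Finset.range (n + 1), Polynomial.C ((-1) ^ i * a i) * Polynomial.X ^ (n - i))
    (hsplit : P.Splits)
    (hpos : ∀ x : ℝ, P.IsRoot x → 0 < x) :
    ∀ i : ℕ, 2 ≤ i → i ≤ n →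
      0 < a i ∧ a i ≤ (n.choose i : ℝ) * (a 1 / n) ^ i :=
  stmt_0_general n a ha0 P hP hsplit hpos
end

section
/- The polynomial (λ-1)(λ-2)^2(λ^3 - 4λ^2 + 8λ - 6) evaluated at any real λ in the interval (1, 1.361) is nonzero. -/
theorem stmt_15 (l : ℝ) (hl : l ∈ Set.Ioo (1 : ℝ) 1.361) :
    (l - 1) * (l - 2) ^ 2 * (l ^ 3 - 4 * l ^ 2 + 8 * l - 6) ≠ 0 := by
  obtain ⟨h1, h2⟩ := hl
  have ha : l - 1 > 0 := by linarith
  have hb : (l - 2) ^ 2 > 0 := by nlinarith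
  have hc : l ^ 3 - 4 * l ^ 2 + 8 * l - 6 < 0 := by nlinarith [sq_nonneg (l - 1.361), sq_nonneg l, sq_nonneg (l-1)]
  have := mul_pos ha hb
  nlinarith [mul_pos (mul_pos ha hb) (neg_pos.mpr hc)]
end
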